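/- Let G' be a finite simple graph with vertex set U', let U ⊆ U', and let J be a set of edges with both endpoints in U. Suppose that the graph G'[U] ∪ J (the subgraph of G' induced by U, together with the edges of J) is k-connected, and that for every edge uv ∈ J the graph G' contains k internally-disjoint u–v paths. Then G' is k-U-connected, i.e., G' contains k internally-disjoint paths between every pair of nodes of U. -/

import Mathlib

/-!
By Menger's theorem it suffices to show that no set `S ⊆ V \ {u, v}` with `|S| < k` separates
`u` from `v` in `G'` (in `G' - uv` with `|S| < k - 1` when `uv` is an edge). Among the `k`
internally disjoint `u`-`v` paths of `G'[U] ∪ J` at most `|S|` meet `S` and at most one uses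
the edge `uv`, so some path survives; each `J`-edge `ab` on it is replaced by one of the `k`
internally disjoint `a`-`b` paths of `G'`, chosen by the same count to avoid `S` and `uv`.
Menger's theorem itself is proved by Diestel's induction on the number of edges: either the
contraction of an edge `xy` has no small separator, or a separator `X ∋ x, y` of size `k`
splits the problem into an `A`-`X` and an `X`-`B` problem in `G - xy`.
-/

open SimpleGraph

/-- `HasIDPaths G u v k` : the graph `G` contains `k` pairwise internally disjoint
`u`-`v` paths, i.e. `k` distinct paths sharing no vertices other than `u` and `v`. -/
def HasIDPaths {V : Type*} (G : SimpleGraph V) (u v : V) (k : ℕ) : Prop :=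
  ∃ P : Fin k → G.Path u v, Function.Injective P ∧
    ∀ i j, i ≠ j → ∀ w, w ∈ (P i).val.support → w ∈ (P j).val.support → w = u ∨ w = v

/-- `KConnected G k` : `G` has `k` internally disjoint paths between every pair of nodes. -/
def KConnected {V : Type*} (G : SimpleGraph V) (k : ℕ) : Prop :=
  ∀ u v : V, u ≠ v → HasIDPaths G u v k

lemma Set.ncard_le_ncard_of_forall_exists {ι α : Type*} {I : Set ι} {S : Set α} (hS : S.Finite)
    (R : ι → α → Prop) (hI : ∀ i ∈ I, ∃ a ∈ S, R i a)
    (hR : ∀ i j, ∀ a ∈ S, R i a → R j a → i = j) : I.ncard ≤ S.ncard := by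
  choose f hfS hfR using hI
  have := hS.to_subtype
  rw [← Nat.card_coe_set_eq, ← Nat.card_coe_set_eq]
  refine Nat.card_le_card_of_injective (fun i : I => ⟨f i i.2, hfS i i.2⟩) fun i j hij => ?_
  have hij : f i i.2 = f j j.2 := congrArg Subtype.val hij
  exact Subtype.ext (hR i j _ (hfS i i.2) (hfR i i.2) (hij ▸ hfR j j.2))

namespace SimpleGraph

variable {V W : Type*} {G H : SimpleGraph V}

namespace Walk

lemma exists_isPath_first_mem [DecidableEq V] {X : Set V} {a b : V} (p : G.Walk a b)
    (hX : ∃ w ∈ p.support, w ∈ X) :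
    ∃ z ∈ X, ∃ q : G.Walk a z, q.IsPath ∧ q.support ⊆ p.support ∧
      ∀ w ∈ q.support, w ∈ X → w = z := by
  suffices ∃ z ∈ X, ∃ q : G.Walk a z, q.support ⊆ p.support ∧ ∀ w ∈ q.support, w ∈ X → w = z by
    obtain ⟨z, hzX, q, hqp, hqX⟩ := this
    exact ⟨z, hzX, q.bypass, q.bypass_isPath, fun w hw => hqp (q.support_bypass_subset_support hw),
      fun w hw => hqX w (q.support_bypass_subset_support hw)⟩
  induction p with
  | nil =>
    obtain ⟨w, hw, hwX⟩ := hX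
    rw [support_nil, List.mem_singleton] at hw
    subst hw
    exact ⟨w, hwX, nil, fun _ h => h, by simp⟩
  | @cons a c b h p ih =>
    by_cases haX : a ∈ X
    · exact ⟨a, haX, nil, by simp, by simp⟩
    obtain ⟨w, hw, hwX⟩ := hX
    have hwp : w ∈ p.support := by
      rw [support_cons, List.mem_cons] at hw
      exact hw.resolve_left fun h => haX (h ▸ hwX)
    obtain ⟨z, hzX, q, hqp, hqX⟩ := ih ⟨w, hwp, hwX⟩
    refine ⟨z, hzX, cons h q, ?_, ?_⟩
    · rw [support_cons, support_cons]
      exact List.cons_subset_cons a hqp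
    · intro w hw hwX
      rw [support_cons, List.mem_cons] at hw
      exact hw.elim (fun h => absurd (h ▸ hwX) haX) (hqX w · hwX)

lemma IsPath.eq_cons_nil_of_mem_edges {u v : V} {p : G.Walk u v} (hp : p.IsPath)
    (he : s(u, v) ∈ p.edges) : ∃ h : G.Adj u v, p = cons h Walk.nil := by
  cases p with
  | nil => simp at he
  | cons h p =>
    rw [cons_isPath_iff] at hp
    rw [edges_cons, List.mem_cons] at he
    obtain he | he := he
    · obtain ⟨-, rfl⟩ | ⟨rfl, rfl⟩ := Sym2.eq_iff.mp he
      · exact ⟨h, by rw [(isPath_iff_nil.mp hp.1).eq_nil]⟩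
      · exact absurd p.end_mem_support hp.2
    · exact absurd (p.fst_mem_support_of_mem_edges he) hp.2

lemma exists_walk_map (f : V → W) {c d : V} (p : G.Walk c d) :
    ∃ q : (G.map f).Walk (f c) (f d), ∀ w ∈ q.support, ∃ w' ∈ p.support, f w' = w := by
  induction p with
  | nil => exact ⟨nil, by simp⟩
  | @cons c e d h p ih =>
    obtain ⟨q, hq⟩ := ih
    by_cases hce : f c = f e
    · refine ⟨q.copy hce.symm rfl, fun w hw => ?_⟩
      obtain ⟨w', hw', rfl⟩ := hq w (by simpa using hw)
      exact ⟨w', by simp [hw'], rfl⟩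
    · refine ⟨cons (map_adj_apply' h hce) q, fun w hw => ?_⟩
      rw [support_cons, List.mem_cons] at hw
      obtain rfl | hw := hw
      · exact ⟨c, by simp, rfl⟩
      · obtain ⟨w', hw', rfl⟩ := hq w hw
        exact ⟨w', by simp [hw'], rfl⟩

lemma exists_walk_of_map_eq {f : V → W} (hf : ∀ a b, f a = f b → a ≠ b → G.Adj a b) {a b : V}
    (h : f a = f b) :
    ∃ p : G.Walk a b, ∀ w ∈ p.support, f w = f a := by
  by_cases hab : a = b
  · subst hab
    exact ⟨nil, by simp⟩
  · exact ⟨(hf a b h hab).toWalk, by simp [h]⟩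

lemma exists_lift_walk {f : V → W} (hf : ∀ a b, f a = f b → a ≠ b → G.Adj a b) {c d : W}
    (q : (G.map f).Walk c d) {c' d' : V} (hc : f c' = c)
    (hd : f d' = d) : ∃ p : G.Walk c' d', ∀ w ∈ p.support, f w ∈ q.support := by
  induction q generalizing c' with
  | nil =>
    obtain ⟨p, hp⟩ := exists_walk_of_map_eq hf (hc.trans hd.symm)
    exact ⟨p, fun w hw => by simp [hp w hw, hc]⟩
  | cons h q ih =>
    obtain ⟨-, a, b, hab, rfl, rfl⟩ := (map_adj' f G _ _).mp h
    obtain ⟨p₁, hp₁⟩ := exists_walk_of_map_eq hf hc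
    obtain ⟨p₂, hp₂⟩ := ih rfl hd
    refine ⟨p₁.append (cons hab p₂), fun w hw => ?_⟩
    rw [mem_support_append_iff, support_cons, List.mem_cons] at hw
    obtain hw | rfl | hw := hw
    · simp [hp₁ w hw, hc]
    · simp
    · simp [hp₂ w hw]

end Walk

lemma Path.eq_of_mem_edges {u v : V} {P Q : G.Path u v}
    (hPQ : ∀ w ∈ P.1.support, w ∈ Q.1.support → w = u ∨ w = v) {e : Sym2 V}
    (hP : e ∈ P.1.edges) (hQ : e ∈ Q.1.edges) : P = Q := by
  induction e using Sym2.ind with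
  | _ a b =>
  have hab := (G.mem_edgeSet.mp (P.1.edges_subset_edgeSet hP)).ne
  have he : s(a, b) = s(u, v) := by
    rcases hPQ a (P.1.fst_mem_support_of_mem_edges hP) (Q.1.fst_mem_support_of_mem_edges hQ)
      with rfl | rfl <;>
    rcases hPQ b (P.1.snd_mem_support_of_mem_edges hP) (Q.1.snd_mem_support_of_mem_edges hQ)
      with rfl | rfl
    all_goals first | exact absurd rfl hab | rfl | exact Sym2.eq_swap
  rw [he] at hP hQ
  obtain ⟨_, hP'⟩ := P.2.eq_cons_nil_of_mem_edges hP
  obtain ⟨_, hQ'⟩ := Q.2.eq_cons_nil_of_mem_edges hQ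
  exact Subtype.ext (hP'.trans hQ'.symm)

def Separates (G : SimpleGraph V) (A B S : Set V) : Prop :=
  ∀ a ∈ A, ∀ b ∈ B, ∀ p : G.Walk a b, ∃ s ∈ p.support, s ∈ S

def HasDisjointWalks (G : SimpleGraph V) (A B : Set V) (k : ℕ) : Prop :=
  ∃ (a b : Fin k → V) (p : ∀ i, G.Walk (a i) (b i)), (∀ i, a i ∈ A) ∧ (∀ i, b i ∈ B) ∧
    Pairwise fun i j => (p i).support.Disjoint (p j).support

variable {A B S X Y : Set V} {k : ℕ}

lemma Separates.symm (h : G.Separates A B S) : G.Separates B A S := by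
  intro b hb a ha p
  simpa using h a ha b hb p.reverse

lemma HasDisjointWalks.symm (h : G.HasDisjointWalks A B k) : G.HasDisjointWalks B A k := by
  obtain ⟨a, b, p, ha, hb, hp⟩ := h
  exact ⟨b, a, fun i => (p i).reverse, hb, ha, fun i j hij w hwi hwj =>
    hp hij (by simpa using hwi) (by simpa using hwj)⟩

lemma HasDisjointWalks.mono (hGH : G ≤ H) (h : G.HasDisjointWalks A B k) :
    H.HasDisjointWalks A B k := by
  obtain ⟨a, b, p, ha, hb, hp⟩ := h
  exact ⟨a, b, fun i => (p i).mapLe hGH, ha, hb, by simpa [Walk.support_mapLe_eq_support]⟩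

lemma HasDisjointWalks.of_map {f : V → W} (hf : ∀ a b, f a = f b → a ≠ b → G.Adj a b)
    (h : (G.map f).HasDisjointWalks (f '' A) (f '' B) k) : G.HasDisjointWalks A B k := by
  obtain ⟨a, b, q, ha, hb, hq⟩ := h
  choose a' ha' hfa using ha
  choose b' hb' hfb using hb
  choose p hp using fun i => (q i).exists_lift_walk hf (hfa i) (hfb i)
  exact ⟨a', b', p, ha', hb', fun i j hij w hwi hwj => hq hij (hp i w hwi) (hp j w hwj)⟩

lemma Separates.of_map {f : V → W} {Y : Set W} (hY : (G.map f).Separates (f '' A) (f '' B) Y) :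
    G.Separates A B (f ⁻¹' Y) := by
  intro a ha b hb p
  obtain ⟨q, hq⟩ := p.exists_walk_map f
  obtain ⟨s, hs, hsY⟩ := hY _ ⟨a, ha, rfl⟩ _ ⟨b, hb, rfl⟩ q
  obtain ⟨w, hw, rfl⟩ := hq s hs
  exact ⟨w, hw, hsY⟩

lemma Separates.of_deleteEdges_left {x y : V} {T : Set V} (hX : G.Separates A B X) (hx : x ∈ X)
    (hy : y ∈ X) (hxy : x ≠ y) (hT : (G.deleteEdges {s(x, y)}).Separates A X T) :
    G.Separates A B T := by
  classical
  intro a ha b hb p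
  obtain ⟨z, hzX, q, -, hqp, hqX⟩ := p.exists_isPath_first_mem (hX a ha b hb p)
  have hq : ∀ e ∈ q.edges, e ∉ ({s(x, y)} : Set (Sym2 V)) := by
    rintro e he rfl
    exact hxy ((hqX x (q.fst_mem_support_of_mem_edges he) hx).trans
      (hqX y (q.snd_mem_support_of_mem_edges he) hy).symm)
  obtain ⟨s, hs, hsT⟩ := hT a ha z hzX (q.toDeleteEdges _ hq)
  exact ⟨s, hqp (by simpa using hs), hsT⟩

lemma Separates.of_deleteEdges_right {x y : V} {T : Set V} (hX : G.Separates A B X) (hx : x ∈ X)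
    (hy : y ∈ X) (hxy : x ≠ y) (hT : (G.deleteEdges {s(x, y)}).Separates X B T) :
    G.Separates A B T :=
  (hX.symm.of_deleteEdges_left hx hy hxy hT.symm).symm

lemma Separates.eq_of_mem_support (hX : G.Separates A B X) {a b z t w : V} (ha : a ∈ A)
    (hb : b ∈ B) {p : G.Walk a z} (hp : p.IsPath) (hpX : ∀ w ∈ p.support, w ∈ X → w = z)
    {q : G.Walk b t} (hq : q.IsPath) (hqX : ∀ w ∈ q.support, w ∈ X → w = t)
    (hwp : w ∈ p.support) (hwq : w ∈ q.support) : w = z ∧ w = t := by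
  classical
  suffices hwX : w ∈ X from ⟨hpX w hwp hwX, hqX w hwq hwX⟩
  by_contra hwX
  obtain ⟨s, hs, hsX⟩ := hX a ha b hb ((p.takeUntil w hwp).append (q.takeUntil w hwq).reverse)
  rw [Walk.mem_support_append_iff, Walk.support_reverse, List.mem_reverse] at hs
  obtain hs | hs := hs
  · obtain rfl := hpX s (p.support_takeUntil_subset_support hwp hs) hsX
    exact Walk.endpoint_notMem_support_takeUntil hp hwp (fun h => hwX (h ▸ hsX)) hs
  · obtain rfl := hqX s (q.support_takeUntil_subset_support hwq hs) hsX
    exact Walk.endpoint_notMem_support_takeUntil hq hwq (fun h => hwX (h ▸ hsX)) hs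

lemma HasDisjointWalks.exists_isPath_first_mem (h : G.HasDisjointWalks A X k) :
    ∃ (a z : Fin k → V) (p : ∀ i, G.Walk (a i) (z i)), (∀ i, a i ∈ A) ∧ (∀ i, z i ∈ X) ∧
      (Pairwise fun i j => (p i).support.Disjoint (p j).support) ∧
      ∀ i, (p i).IsPath ∧ ∀ w ∈ (p i).support, w ∈ X → w = z i := by
  classical
  obtain ⟨a, b, p, ha, hb, hp⟩ := h
  choose z hzX q hq hqp hqX using
    fun i => (p i).exists_isPath_first_mem ⟨b i, (p i).end_mem_support, hb i⟩
  exact ⟨a, z, q, ha, hzX, fun i j hij w hwi hwj => hp hij (hqp i hwi) (hqp j hwj),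
    fun i => ⟨hq i, hqX i⟩⟩

lemma injective_of_pairwise_disjoint_support {a z : Fin k → V} {p : ∀ i, G.Walk (a i) (z i)}
    (hp : Pairwise fun i j => (p i).support.Disjoint (p j).support) : Function.Injective z := by
  intro i j h
  by_contra hij
  exact hp hij (p i).end_mem_support (by rw [h]; exact (p j).end_mem_support)

lemma HasDisjointWalks.glue [Finite V] (hAX : G.HasDisjointWalks A X k)
    (hXB : G.HasDisjointWalks X B k) (hX : G.Separates A B X) (hXk : X.ncard = k) :
    G.HasDisjointWalks A B k := by
  obtain ⟨a, z, p, ha, hz, hpd, hp⟩ := hAX.exists_isPath_first_mem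
  obtain ⟨b, t, q, hb, ht, hqd, hq⟩ := hXB.symm.exists_isPath_first_mem
  have hcross : ∀ i j w, w ∈ (p i).support → w ∈ (q j).support → w = z i ∧ w = t j :=
    fun i j w => hX.eq_of_mem_support (ha i) (hb j) (hp i).1 (hp i).2 (hq j).1 (hq j).2
  have hz_inj := injective_of_pairwise_disjoint_support hpd
  have ht_range : Set.range t = X := by
    refine Set.eq_of_subset_of_ncard_le (Set.range_subset_iff.mpr ht) ?_
    rw [Set.ncard_range_of_injective (injective_of_pairwise_disjoint_support hqd), hXk,
      Nat.card_fin]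
  choose σ hσ using fun i => ht_range ▸ hz i
  have hσ_inj : Function.Injective σ := fun i j h => hz_inj (by rw [← hσ i, ← hσ j, h])
  let r i := (p i).append ((q (σ i)).reverse.copy (hσ i) rfl)
  have hr : ∀ i w, w ∈ (r i).support → w ∈ (p i).support ∨ w ∈ (q (σ i)).support := by
    simp [r, Walk.mem_support_append_iff]
  refine ⟨a, b ∘ σ, r, ha, fun i => hb (σ i), fun i j hij w hwi hwj => ?_⟩
  obtain hwi | hwi := hr i w hwi <;> obtain hwj | hwj := hr j w hwj
  · exact hpd hij hwi hwj
  · obtain ⟨rfl, h⟩ := hcross i (σ j) w hwi hwj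
    exact hij (hz_inj (h.trans (hσ j)))
  · obtain ⟨rfl, h⟩ := hcross j (σ i) w hwj hwi
    exact hij (hz_inj (h.trans (hσ i))).symm
  · exact hqd (hσ_inj.ne hij) hwi hwj

lemma hasDisjointWalks_of_forall_not_adj [Finite V] (hG : ∀ x y, ¬ G.Adj x y)
    (h : ∀ S, G.Separates A B S → k ≤ S.ncard) : G.HasDisjointWalks A B k := by
  have hAB : G.Separates A B (A ∩ B) := by
    intro a ha b hb p
    cases p with
    | nil => exact ⟨a, by simp, ha, hb⟩
    | cons hadj _ => exact absurd hadj (hG _ _)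
  obtain ⟨T, hT, hTk⟩ := Set.exists_subset_card_eq (h _ hAB)
  let e : T ≃ Fin k := Finite.equivFinOfCardEq (by rwa [Nat.card_coe_set_eq])
  refine ⟨fun i => e.symm i, fun i => e.symm i, fun i => Walk.nil, fun i => (hT (e.symm i).2).1,
    fun i => (hT (e.symm i).2).2, fun i j hij w hwi hwj => ?_⟩
  simp only [Walk.support_nil, List.mem_singleton] at hwi hwj
  exact hij (e.symm.injective (Subtype.ext (hwi.symm.trans hwj)))

lemma exists_separates_of_map_update [Finite V] [DecidableEq V] {x y : V} (hxy : x ≠ y)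
    (h : ∀ S, G.Separates A B S → k ≤ S.ncard)
    (hY : (G.map (Function.update id y x)).Separates
      (Function.update id y x '' A) (Function.update id y x '' B) Y) (hYk : Y.ncard < k) :
    ∃ X, G.Separates A B X ∧ x ∈ X ∧ y ∈ X ∧ X.ncard = k := by
  set f := Function.update id y x
  have hfy : f y = x := Function.update_self ..
  have hf : ∀ z, z ≠ y → f z = z := fun z hz => Function.update_of_ne hz ..
  have hX := hY.of_map
  have hpre : f ⁻¹' Y ⊆ insert y Y := by
    intro z hz
    by_cases hzy : z = y
    · exact hzy ▸ Set.mem_insert _ _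
    · exact Set.mem_insert_of_mem _ (hf z hzy ▸ hz)
  have hxY : x ∈ Y := by
    by_contra hxY
    have hsub : f ⁻¹' Y ⊆ Y := fun z hz =>
      ((hpre hz).resolve_left fun hzy => hxY (hfy ▸ hzy ▸ hz))
    exact (h _ hX).not_gt ((Set.ncard_le_ncard hsub).trans_lt hYk)
  refine ⟨f ⁻¹' Y, hX, by simpa [hf x hxy], by simpa [hfy], le_antisymm ?_ (h _ hX)⟩
  calc (f ⁻¹' Y).ncard ≤ (insert y Y).ncard := Set.ncard_le_ncard hpre
    _ ≤ Y.ncard + 1 := Set.ncard_insert_le _ _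
    _ ≤ k := hYk

lemma ncard_edgeSet_map_lt [Finite V] {f : V → W} {x y : V} (hxy : G.Adj x y) (hf : f x = f y) :
    (G.map f).edgeSet.ncard < G.edgeSet.ncard := by
  have hsub : (G.map f).edgeSet ⊆ Sym2.map f '' (G.edgeSet \ {s(x, y)}) := by
    intro e he
    induction e using Sym2.ind with
    | _ a b =>
    obtain ⟨hne, a', b', h', rfl, rfl⟩ := (map_adj' f G a b).mp he
    refine ⟨s(a', b'), ⟨h', fun hmem => ?_⟩, Sym2.map_mk ..⟩
    rw [Set.mem_singleton_iff, Sym2.eq_iff] at hmem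
    obtain ⟨rfl, rfl⟩ | ⟨rfl, rfl⟩ := hmem
    · exact hne hf
    · exact hne hf.symm
  calc (G.map f).edgeSet.ncard
      ≤ (Sym2.map f '' (G.edgeSet \ {s(x, y)})).ncard :=
        Set.ncard_le_ncard hsub ((Set.toFinite _).image _)
    _ ≤ (G.edgeSet \ {s(x, y)}).ncard := Set.ncard_image_le (Set.toFinite _)
    _ < G.edgeSet.ncard := Set.ncard_sdiff_singleton_lt_of_mem hxy (Set.toFinite _)

theorem hasDisjointWalks_of_forall_separates [Finite V] (G : SimpleGraph V) (A B : Set V) (k : ℕ)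
    (h : ∀ S, G.Separates A B S → k ≤ S.ncard) : G.HasDisjointWalks A B k := by
  classical
  by_cases hG : ∃ x y, G.Adj x y
  swap
  · exact hasDisjointWalks_of_forall_not_adj (fun x y hxy => hG ⟨x, y, hxy⟩) h
  obtain ⟨x, y, hxy⟩ := hG
  -- `G.map f` is the contraction `G / xy`, with `y` merged into `x`
  set f := Function.update id y x
  have hf : ∀ a b, f a = f b → a ≠ b → G.Adj a b := by
    intro a b hab hne
    simp only [f, Function.update_apply, id] at hab
    split_ifs at hab <;> subst_vars <;> first | exact hxy | exact hxy.symm | exact absurd rfl hne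
  by_cases hsmall : ∃ Y, (G.map f).Separates (f '' A) (f '' B) Y ∧ Y.ncard < k
  · obtain ⟨Y, hY, hYk⟩ := hsmall
    obtain ⟨X, hX, hxX, hyX, hXk⟩ := exists_separates_of_map_update hxy.ne h hY hYk
    have hlt : (G.deleteEdges {s(x, y)}).edgeSet.ncard < G.edgeSet.ncard := by
      rw [edgeSet_deleteEdges]
      exact Set.ncard_sdiff_singleton_lt_of_mem hxy (Set.toFinite _)
    have hAX := hasDisjointWalks_of_forall_separates (G.deleteEdges {s(x, y)}) A X k
      fun T hT => h T (hX.of_deleteEdges_left hxX hyX hxy.ne hT)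
    have hXB := hasDisjointWalks_of_forall_separates (G.deleteEdges {s(x, y)}) X B k
      fun T hT => h T (hX.of_deleteEdges_right hxX hyX hxy.ne hT)
    exact (hAX.mono (deleteEdges_le _)).glue (hXB.mono (deleteEdges_le _)) hX hXk
  · simp only [not_exists, not_and, not_lt] at hsmall
    have hlt := ncard_edgeSet_map_lt hxy (show f x = f y by simp [f, hxy.ne])
    exact (hasDisjointWalks_of_forall_separates (G.map f) _ _ k hsmall).of_map hf
termination_by G.edgeSet.ncard
decreasing_by all_goals assumption

namespace Walk

lemma notMem_support_of_deleteIncidenceSet {x a b : V} (p : (G.deleteIncidenceSet x).Walk a b)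
    (ha : a ≠ x) : x ∉ p.support := by
  intro hx
  cases p with
  | nil => exact ha (List.mem_singleton.mp hx).symm
  | cons h p =>
    exact (support_deleteIncidenceSet_subset G x
      (mem_support_of_mem_walk_support _ not_nil_cons hx)).2 rfl

lemma exists_deleteIncidenceSet_walk {x a b : V} (p : G.Walk a b) (hx : x ∉ p.support) :
    ∃ q : (G.deleteIncidenceSet x).Walk a b, q.support = p.support := by
  refine ⟨p.transfer _ fun e he => ?_, p.support_transfer _⟩
  rw [edgeSet_deleteIncidenceSet]
  refine ⟨p.edges_subset_edgeSet he, fun hxe => hx ?_⟩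
  obtain ⟨y, rfl⟩ := Sym2.mem_iff_exists.mp hxe.2
  exact p.fst_mem_support_of_mem_edges he

lemma exists_inner_walk {u v : V} (huv : u ≠ v) (hadj : ¬ G.Adj u v) (p : G.Walk u v) :
    ∃ a ∈ G.neighborSet u, ∃ b ∈ G.neighborSet v, ∃ q : G.Walk a b,
      q.support ⊆ p.support ∧ u ∉ q.support ∧ v ∉ q.support := by
  classical
  have hp := p.bypass_isPath
  obtain ⟨a, hua, r, hr⟩ := exists_eq_cons_of_ne huv p.bypass
  rw [hr, cons_isPath_iff] at hp
  have hav : a ≠ v := fun h => hadj (h ▸ hua)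
  obtain ⟨b, hvb, s, hs⟩ := exists_eq_cons_of_ne hav.symm r.reverse
  have hrs : r.reverse.support = v :: s.support := by rw [hs, support_cons]
  have hsr : ∀ w ∈ s.support, w ∈ r.support := fun w hw => by
    rw [← List.mem_reverse, ← support_reverse, hrs]
    exact List.mem_cons_of_mem _ hw
  refine ⟨a, hua, b, hvb, s.reverse, fun w hw => ?_, fun hu => ?_, fun hv => ?_⟩
  · rw [support_reverse, List.mem_reverse] at hw
    apply p.support_bypass_subset_support
    rw [hr, support_cons]
    exact List.mem_cons_of_mem _ (hsr w hw)
  · rw [support_reverse, List.mem_reverse] at hu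
    exact hp.2 (hsr u hu)
  · rw [support_reverse, List.mem_reverse] at hv
    have hnd := hp.1.reverse.support_nodup
    rw [hrs] at hnd
    exact (List.nodup_cons.mp hnd).1 hv

lemma exists_avoiding_of_forall_adj {S : Set V}
    (hGH : ∀ a b, G.Adj a b → a ∉ S → b ∉ S → ∃ q : H.Walk a b, ∀ w ∈ q.support, w ∉ S)
    {u v : V} (p : G.Walk u v) (hp : ∀ w ∈ p.support, w ∉ S) :
    ∃ q : H.Walk u v, ∀ w ∈ q.support, w ∉ S := by
  induction p with
  | nil => exact ⟨nil, hp⟩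
  | @cons a b c h p ih =>
    obtain ⟨q₁, hq₁⟩ := hGH a b h (hp a (by simp)) (hp b (by simp))
    obtain ⟨q₂, hq₂⟩ := ih fun w hw => hp w (by simp [hw])
    exact ⟨q₁.append q₂, fun w hw => ((mem_support_append_iff _ _).mp hw).elim (hq₁ w) (hq₂ w)⟩

end Walk

end SimpleGraph

section IDPaths

open Walk

variable {V W : Type*} {G : SimpleGraph V} {u v : V} {k : ℕ}

lemma HasIDPaths.map {H : SimpleGraph W} (f : G ↪g H) (h : HasIDPaths G u v k) :
    HasIDPaths H (f u) (f v) k := by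
  obtain ⟨P, hPinj, hP⟩ := h
  refine ⟨fun i => (P i).mapEmbedding f, (Path.mapEmbedding_injective f u v).comp hPinj,
    fun i j hij w hwi hwj => ?_⟩
  change w ∈ ((P i).1.map f.toHom).support at hwi
  change w ∈ ((P j).1.map f.toHom).support at hwj
  rw [Walk.support_map, List.mem_map] at hwi hwj
  obtain ⟨w₁, hw₁, rfl⟩ := hwi
  obtain ⟨w₂, hw₂, hw⟩ := hwj
  obtain rfl := f.injective hw
  rcases hP i j hij w₂ hw₁ hw₂ with rfl | rfl <;> simp

lemma HasIDPaths.succ_of_adj (hadj : G.Adj u v)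
    (h : HasIDPaths (G.deleteEdges {s(u, v)}) u v k) : HasIDPaths G u v (k + 1) := by
  obtain ⟨Q, hQinj, hQ⟩ := h
  have hinj : Function.Injective (Hom.ofLE (deleteEdges_le (G := G) {s(u, v)})) :=
    Function.injective_id
  let P i := (Q i).map _ hinj
  have hPsupp : ∀ i, (P i).1.support = (Q i).1.support := by simp [P]
  have hPedges : ∀ i, (P i).1.edges = (Q i).1.edges := by simp [P]
  refine ⟨Fin.cons (Path.singleton hadj) P,
    Fin.cons_injective_iff.mpr ⟨?_, (Path.map_injective hinj u v).comp hQinj⟩, ?_⟩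
  · rintro ⟨i, hi⟩
    have he : s(u, v) ∈ (Q i).1.edges := by
      rw [← hPedges, hi]
      simp [Path.singleton]
    simpa using (Q i).1.edges_subset_edgeSet he
  · intro i j hij w hwi hwj
    cases i using Fin.cases with
    | zero => simpa [Path.singleton] using hwi
    | succ i =>
      cases j using Fin.cases with
      | zero => simpa [Path.singleton] using hwj
      | succ j =>
        simp only [Fin.cons_succ, hPsupp] at hwi hwj
        exact hQ i j (ne_of_apply_ne Fin.succ hij) w hwi hwj

lemma HasIDPaths.exists_path_avoiding [Finite V] (h : HasIDPaths G u v k) {S : Set V}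
    (huS : u ∉ S) (hvS : v ∉ S) {D : Set (Sym2 V)} (hk : S.ncard + D.ncard < k) :
    ∃ P : G.Path u v, (∀ w ∈ P.1.support, w ∉ S) ∧ ∀ e ∈ P.1.edges, e ∉ D := by
  obtain ⟨P, hPinj, hP⟩ := h
  set badS := {i | ∃ w ∈ S, w ∈ (P i).1.support}
  set badD := {i | ∃ e ∈ D, e ∈ (P i).1.edges}
  have hS : badS.ncard ≤ S.ncard :=
    Set.ncard_le_ncard_of_forall_exists S.toFinite _ (fun i hi => hi) fun i j w hw hi hj => by
      by_contra hij
      rcases hP i j hij w hi hj with rfl | rfl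
      exacts [huS hw, hvS hw]
  have hD : badD.ncard ≤ D.ncard :=
    Set.ncard_le_ncard_of_forall_exists D.toFinite _ (fun i hi => hi) fun i j e _ hi hj => by
      by_contra hij
      exact hij (hPinj (Path.eq_of_mem_edges (hP i j hij) hi hj))
  obtain ⟨i, hi⟩ : ∃ i, i ∉ badS ∪ badD := by
    by_contra! hall
    have hle := Set.ncard_le_ncard (s := Set.univ) (fun i _ => hall i) (Set.toFinite (badS ∪ badD))
    rw [Set.ncard_univ, Nat.card_fin] at hle
    have := Set.ncard_union_le badS badD
    omega
  simp only [Set.mem_union, Set.mem_ofPred_eq, not_or, not_exists, not_and, badS, badD] at hi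
  exact ⟨P i, fun w hw hwS => hi.1 w hwS hw, fun e he heD => hi.2 e heD he⟩

lemma hasIDPaths_of_hasDisjointWalks (huv : u ≠ v) (hadj : ¬ G.Adj u v)
    (h : ((G.deleteIncidenceSet u).deleteIncidenceSet v).HasDisjointWalks
      (G.neighborSet u) (G.neighborSet v) k) :
    HasIDPaths G u v k := by
  classical
  obtain ⟨a, b, p, ha, hb, hp⟩ := h
  replace ha : ∀ i, G.Adj u (a i) := ha
  replace hb : ∀ i, G.Adj v (b i) := hb
  have hle : (G.deleteIncidenceSet u).deleteIncidenceSet v ≤ G :=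
    (deleteIncidenceSet_le _ v).trans (deleteIncidenceSet_le G u)
  have hpu : ∀ i, u ∉ (p i).support := fun i => by
    simpa using ((p i).mapLe (deleteIncidenceSet_le _ v)).notMem_support_of_deleteIncidenceSet
      (ha i).ne.symm
  have hpv : ∀ i, v ∉ (p i).support := fun i =>
    (p i).notMem_support_of_deleteIncidenceSet fun h => hadj (h ▸ ha i)
  let q i := ((p i).mapLe hle).bypass
  have hqp : ∀ i, (q i).support ⊆ (p i).support := fun i w hw => by
    simpa using ((p i).mapLe hle).support_bypass_subset_support hw
  let P i : G.Path u v := ⟨cons (ha i) ((q i).concat (hb i).symm),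
    (cons_isPath_iff _ _).mpr ⟨(bypass_isPath _).concat (fun h => hpv i (hqp i h)) _,
      by simpa [support_concat, huv] using fun h => hpu i (hqp i h)⟩⟩
  have hP : ∀ i w, w ∈ (P i).1.support → w = u ∨ w ∈ (p i).support ∨ w = v := fun i w hw => by
    simp only [P, Walk.support_cons, Walk.support_concat, List.mem_cons, List.mem_append] at hw
    tauto
  refine ⟨P, fun i j hij => ?_, fun i j hij w hwi hwj => ?_⟩
  · by_contra hne
    have hai : a i ∈ (P j).1.support := by
      rw [← hij]
      simp [P, Walk.support_cons, Walk.support_concat]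
    rcases hP j _ hai with h | h | h
    · exact (ha i).ne h.symm
    · exact hp hne (p i).start_mem_support h
    · exact hadj (h ▸ ha i)
  · rcases hP i w hwi with h | h | h
    · exact Or.inl h
    · rcases hP j w hwj with h' | h' | h'
      · exact Or.inl h'
      · exact (hp hij h h').elim
      · exact Or.inr h'
    · exact Or.inr h

theorem hasIDPaths_of_forall_exists_walk [Finite V] (huv : u ≠ v) (hadj : ¬ G.Adj u v)
    (h : ∀ S : Set V, u ∉ S → v ∉ S → S.ncard < k → ∃ p : G.Walk u v, ∀ w ∈ p.support, w ∉ S) :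
    HasIDPaths G u v k := by
  refine hasIDPaths_of_hasDisjointWalks huv hadj
    (hasDisjointWalks_of_forall_separates _ _ _ k fun T hT => ?_)
  by_contra! hTk
  obtain ⟨p, hp⟩ := h (T \ {u, v}) (by simp) (by simp)
    ((Set.ncard_le_ncard Set.sdiff_subset).trans_lt hTk)
  obtain ⟨a, ha, b, hb, q, hqp, hqu, hqv⟩ := p.exists_inner_walk huv hadj
  obtain ⟨q₁, hq₁⟩ := q.exists_deleteIncidenceSet_walk hqu
  obtain ⟨q₂, hq₂⟩ := q₁.exists_deleteIncidenceSet_walk (hq₁ ▸ hqv)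
  obtain ⟨t, ht, htT⟩ := hT a ha b hb q₂
  rw [hq₂, hq₁] at ht
  exact hp t (hqp ht) ⟨htT, by rintro (rfl | rfl) <;> contradiction⟩

theorem KConnected.exists_walk_avoiding_of_induce_sup [Finite V] {G' J : SimpleGraph V}
    {U : Set V} (hconn : KConnected ((G' ⊔ J).induce U) k)
    (hpaths : ∀ a b, J.Adj a b → HasIDPaths G' a b k) (hu : u ∈ U) (hv : v ∈ U) (huv : u ≠ v)
    {S : Set V} (huS : u ∉ S) (hvS : v ∉ S) {D : Set (Sym2 V)} (hk : S.ncard + D.ncard < k) :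
    ∃ p : (G'.deleteEdges D).Walk u v, ∀ w ∈ p.support, w ∉ S := by
  have hsup : HasIDPaths (G' ⊔ J) u v k :=
    (hconn ⟨u, hu⟩ ⟨v, hv⟩ (by simpa using huv)).map (Embedding.induce U)
  obtain ⟨P, hPS, hPD⟩ := hsup.exists_path_avoiding huS hvS hk
  refine (P.1.toDeleteEdges D hPD).exists_avoiding_of_forall_adj (fun a b hab haS hbS => ?_)
    (by simpa using hPS)
  obtain ⟨hG' | hJ, habD⟩ := deleteEdges_adj.mp hab
  · exact ⟨(deleteEdges_adj.mpr ⟨hG', habD⟩).toWalk, by simp [haS, hbS]⟩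
  · obtain ⟨Q, hQS, hQD⟩ := (hpaths a b hJ).exists_path_avoiding haS hbS hk
    exact ⟨Q.1.toDeleteEdges D hQD, by simpa using hQS⟩

end IDPaths

theorem kU_connected_of_augmented_induced_general
    {V : Type*} [Fintype V] (G' : SimpleGraph V) (U : Set V) (k : ℕ)
    (J : SimpleGraph V)
    (hconn : KConnected ((G' ⊔ J).induce U) k)
    (hpaths : ∀ u v : V, J.Adj u v → HasIDPaths G' u v k) :
    ∀ u v : V, u ∈ U → v ∈ U → u ≠ v → HasIDPaths G' u v k := by
  intro u v hu hv huv
  by_cases hadj : G'.Adj u v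
  · obtain _ | k := k
    · exact ⟨Fin.elim0, fun i => i.elim0, fun i => i.elim0⟩
    refine (hasIDPaths_of_forall_exists_walk huv (by simp [deleteEdges_adj])
      fun S huS hvS hS => ?_).succ_of_adj hadj
    exact hconn.exists_walk_avoiding_of_induce_sup hpaths hu hv huv huS hvS
      (by rw [Set.ncard_singleton]; omega)
  · refine hasIDPaths_of_forall_exists_walk huv hadj fun S huS hvS hS => ?_
    obtain ⟨p, hp⟩ := hconn.exists_walk_avoiding_of_induce_sup hpaths hu hv huv huS hvS
      (D := ∅) (by simpa using hS)
    exact ⟨p.mapLe (deleteEdges_le _), by simpa using hp⟩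

/-- Let `U` be a set of nodes of `G'` and `J` a set of edges with both endpoints in `U`.
If `G'[U] ∪ J` is `k`-connected and for every edge `uv ∈ J` the graph `G'` contains
`k` internally disjoint `u`-`v` paths, then `G'` is `k`-`U`-connected. -/
theorem kU_connected_of_augmented_induced
    {V : Type*} [Fintype V] (G' : SimpleGraph V) (U : Set V) (k : ℕ)
    (J : SimpleGraph V) (hJU : ∀ u v : V, J.Adj u v → u ∈ U ∧ v ∈ U)
    (hconn : KConnected ((G' ⊔ J).induce U) k)
    (hpaths : ∀ u v : V, J.Adj u v → HasIDPaths G' u v k) :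
    ∀ u v : V, u ∈ U → v ∈ U → u ≠ v → HasIDPaths G' u v k :=
  kU_connected_of_augmented_induced_general G' U k J hconn hpaths
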